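/- Let P, Q be probability measures on a measurable space X and let ρ₁, ρ₀ be probability measures on a measurable space Ω with ρ₁ ≠ ρ₀. Define the probability measures M := (1/2)•(P ⊗ ρ₁ + Q ⊗ ρ₀) and N := ((1/2)•(P + Q)) ⊗ ((1/2)•(ρ₁ + ρ₀)) on X × Ω. Then KL(M‖N) = 0 if and only if P = Q. Consequently, the generator's value gap V′ := −2·KL(M‖N) satisfies V′ ≤ 0 for every choice of Q, and its maximum value 0 is attained exactly when Q = P. -/

import Mathlib

open MeasureTheory ENNReal Classical

/-- The Kullback–Leibler divergence of `μ` with respect to `ν`, valued in `[0,+∞]`: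
`KL(μ‖ν) = ∫ log (dμ/dν) dμ` if `μ ≪ ν` and the log-likelihood ratio is integrable,
and `+∞` otherwise (Mathlib's `InformationTheory.klDiv`). -/
noncomputable def klDiv {Ω : Type*} [MeasurableSpace Ω] (μ ν : Measure Ω) : ℝ≥0∞ :=
  if μ ≪ ν ∧ Integrable (llr μ ν) μ then ENNReal.ofReal (∫ ω, llr μ ν ω ∂μ) else ⊤

/-- The joint distribution `M := (1/2)•(P ⊗ ρ₁ + Q ⊗ ρ₀)` of a sample together with its
anchor label. -/
noncomputable def jointM {X Ω : Type*} [MeasurableSpace X] [MeasurableSpace Ω]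
    (P Q : Measure X) (ρ₁ ρ₀ : Measure Ω) : Measure (X × Ω) :=
  (2⁻¹ : ℝ≥0∞) • (P.prod ρ₁ + Q.prod ρ₀)

/-- The product `N := ((1/2)•(P + Q)) ⊗ ((1/2)•(ρ₁ + ρ₀))` of the two marginals of `M`. -/
noncomputable def jointN {X Ω : Type*} [MeasurableSpace X] [MeasurableSpace Ω]
    (P Q : Measure X) (ρ₁ ρ₀ : Measure Ω) : Measure (X × Ω) :=
  ((2⁻¹ : ℝ≥0∞) • (P + Q)).prod ((2⁻¹ : ℝ≥0∞) • (ρ₁ + ρ₀))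

/-- The generator's value gap `V′ := −2·KL(M‖N)`, valued in `EReal`. -/
noncomputable def valueGap {X Ω : Type*} [MeasurableSpace X] [MeasurableSpace Ω]
    (P Q : Measure X) (ρ₁ ρ₀ : Measure Ω) : EReal :=
  -2 * ((klDiv (jointM P Q ρ₁ ρ₀) (jointN P Q ρ₁ ρ₀) : ℝ≥0∞) : EReal)

section AuxGibbs

variable {α : Type*} [MeasurableSpace α]

/-- Gibbs' inequality with equality case: for probability measures `μ ≪ ν` with integrable
log-likelihood ratio, `∫ llr ≥ 0`, and if `∫ llr ≤ 0` then `μ = ν`. -/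
lemma gibbs_aux (μ ν : Measure α) [IsProbabilityMeasure μ] [IsProbabilityMeasure ν]
    (hac : μ ≪ ν) (hint : Integrable (llr μ ν) μ) :
    0 ≤ ∫ x, llr μ ν x ∂μ ∧ (∫ x, llr μ ν x ∂μ ≤ 0 → μ = ν) := by
  have hexp : (fun x ↦ Real.exp (- llr μ ν x)) =ᵐ[μ] fun x ↦ (ν.rnDeriv μ x).toReal :=
    exp_neg_llr hac
  have hInt2 : Integrable (fun x ↦ (ν.rnDeriv μ x).toReal) μ :=
    Measure.integrable_toReal_rnDeriv
  have hIntExp : Integrable (fun x ↦ Real.exp (- llr μ ν x)) μ := hInt2.congr hexp.symm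
  have hIntNeg : Integrable (fun x ↦ - llr μ ν x) μ := hint.neg
  have hle1 : ∫ x, Real.exp (- llr μ ν x) ∂μ ≤ 1 := by
    rw [integral_congr_ae hexp, Measure.integral_toReal_rnDeriv']
    have h0 : (0:ℝ) ≤ ((ν.singularPart μ) Set.univ).toReal := ENNReal.toReal_nonneg
    simp only [measureReal_def, measure_univ, ENNReal.toReal_one]
    linarith
  have hjensen : Real.exp (∫ x, - llr μ ν x ∂μ) ≤ ∫ x, Real.exp (- llr μ ν x) ∂μ :=
    convexOn_exp.map_integral_le Real.continuous_exp.continuousOn isClosed_univ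
      (Filter.Eventually.of_forall fun _ ↦ Set.mem_univ _) hIntNeg hIntExp
  have hnonneg : 0 ≤ ∫ x, llr μ ν x ∂μ := by
    have := hjensen.trans hle1
    rw [integral_neg] at this
    have := Real.exp_le_one_iff.mp this
    linarith
  refine ⟨hnonneg, fun hle0 ↦ ?_⟩
  have hI0 : ∫ x, llr μ ν x ∂μ = 0 := le_antisymm hle0 hnonneg
  -- strict Jensen: either `-llr` is a.e. constant, or strict inequality
  have hcases := strictConvexOn_exp.ae_eq_const_or_map_average_lt
    Real.continuous_exp.continuousOn isClosed_univ
    (μ := μ) (f := fun x ↦ - llr μ ν x)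
    (Filter.Eventually.of_forall fun _ ↦ Set.mem_univ _) hIntNeg hIntExp
  rw [average_eq_integral, average_eq_integral, integral_neg, hI0, neg_zero, Real.exp_zero]
    at hcases
  rcases hcases with hconst | hlt
  · -- `llr μ ν = 0` a.e. `μ`, hence `rnDeriv = 1` a.e. `μ`
    have hllr0 : ∀ᵐ x ∂μ, llr μ ν x = 0 := by
      filter_upwards [hconst] with x hx
      simpa using hx
    have hlt_top : ∀ᵐ x ∂μ, μ.rnDeriv ν x < ⊤ := hac.ae_le (Measure.rnDeriv_lt_top μ ν)
    have hpos : ∀ᵐ x ∂μ, 0 < μ.rnDeriv ν x := Measure.rnDeriv_pos hac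
    have hone : ∀ᵐ x ∂μ, μ.rnDeriv ν x = 1 := by
      filter_upwards [hllr0, hlt_top, hpos] with x h0 hlt hp
      have htr : 0 < (μ.rnDeriv ν x).toReal := ENNReal.toReal_pos hp.ne' hlt.ne
      have : (μ.rnDeriv ν x).toReal = 1 := by
        have := Real.exp_log htr
        rw [llr] at h0
        rw [h0, Real.exp_zero] at this
        linarith
      rw [← ENNReal.toReal_one] at this
      exact ENNReal.toReal_eq_toReal_iff' hlt.ne ENNReal.one_ne_top |>.mp this
    -- transfer to `ν`-a.e.
    set A : Set α := {x | μ.rnDeriv ν x ≠ 1} with hA_def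
    have hA_meas : MeasurableSet A :=
      ((Measure.measurable_rnDeriv μ ν) (measurableSet_singleton 1)).compl
    have hμA : μ A = 0 := by
      rw [hA_def]
      exact hone
    have hμAc : μ Aᶜ = 1 := (prob_compl_eq_one_iff hA_meas).mpr hμA
    have hνAc : ν Aᶜ = μ Aᶜ := by
      rw [← Measure.setLIntegral_rnDeriv hac Aᶜ]
      rw [← setLIntegral_one]
      refine setLIntegral_congr_fun hA_meas.compl ?_
      intro x hx
      simpa [hA_def, eq_comm] using hx
    have hνA : ν A = 0 := (prob_compl_eq_one_iff hA_meas).mp (hνAc.trans hμAc)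
    have hone_ν : μ.rnDeriv ν =ᵐ[ν] 1 := hνA
    exact (Measure.rnDeriv_eq_one_iff_eq hac).mp hone_ν
  · exact absurd (hlt.trans_le hle1) (by norm_num)

end AuxGibbs

/-- `klDiv μ μ = 0`. -/
lemma klDiv_self_aux {α : Type*} [MeasurableSpace α] (μ : Measure α) [IsFiniteMeasure μ] :
    klDiv μ μ = 0 := by
  have hllr : llr μ μ =ᵐ[μ] 0 := by
    filter_upwards [μ.rnDeriv_self] with x hx
    simp [llr, hx]
  have hint : Integrable (llr μ μ) μ := (integrable_const (0:ℝ)).congr hllr.symm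
  rw [klDiv, if_pos ⟨Measure.AbsolutelyContinuous.rfl, hint⟩, integral_congr_ae hllr]
  simp

/-- The average of two probability measures is a probability measure. -/
lemma half_add_prob {α : Type*} [MeasurableSpace α] (μ ν : Measure α)
    [IsProbabilityMeasure μ] [IsProbabilityMeasure ν] :
    IsProbabilityMeasure ((2⁻¹ : ℝ≥0∞) • (μ + ν)) := by
  constructor
  simp only [Measure.smul_apply, Measure.add_apply, measure_univ, smul_eq_mul]
  rw [one_add_one_eq_two]
  exact ENNReal.inv_mul_cancel two_ne_zero ENNReal.ofNat_ne_top

/-- **Theorem 2.** For probability measures `P, Q` on `X` and anchor distributions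
`ρ₁ ≠ ρ₀` on `Ω`, with `M := (1/2)•(P ⊗ ρ₁ + Q ⊗ ρ₀)` and
`N := ((1/2)•(P + Q)) ⊗ ((1/2)•(ρ₁ + ρ₀))`, we have `KL(M‖N) = 0 ↔ P = Q`.
Consequently the generator's value gap `V′ := −2·KL(M‖N)` satisfies `V′ ≤ 0` for every
choice of `Q`, and its maximum value `0` is attained exactly when `Q = P`. -/
theorem generator_value_gap_max_iff {X Ω : Type*} [MeasurableSpace X] [MeasurableSpace Ω]
    (P Q : Measure X) [IsProbabilityMeasure P] [IsProbabilityMeasure Q]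
    (ρ₁ ρ₀ : Measure Ω) [IsProbabilityMeasure ρ₁] [IsProbabilityMeasure ρ₀]
    (hρ : ρ₁ ≠ ρ₀) :
    (klDiv (jointM P Q ρ₁ ρ₀) (jointN P Q ρ₁ ρ₀) = 0 ↔ P = Q) ∧
      valueGap P Q ρ₁ ρ₀ ≤ 0 ∧
      (valueGap P Q ρ₁ ρ₀ = 0 ↔ Q = P) := by
  haveI h1 : IsProbabilityMeasure ((2⁻¹ : ℝ≥0∞) • (P + Q)) := half_add_prob P Q
  haveI h2 : IsProbabilityMeasure ((2⁻¹ : ℝ≥0∞) • (ρ₁ + ρ₀)) := half_add_prob ρ₁ ρ₀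
  haveI hM : IsProbabilityMeasure (jointM P Q ρ₁ ρ₀) := by
    constructor
    simp only [jointM, Measure.smul_apply, Measure.add_apply, measure_univ, smul_eq_mul]
    rw [one_add_one_eq_two]
    exact ENNReal.inv_mul_cancel two_ne_zero ENNReal.ofNat_ne_top
  haveI hN : IsProbabilityMeasure (jointN P Q ρ₁ ρ₀) := by
    rw [jointN]; infer_instance
  have key : klDiv (jointM P Q ρ₁ ρ₀) (jointN P Q ρ₁ ρ₀) = 0 ↔ P = Q := by
    constructor
    · intro h0
      rw [klDiv] at h0
      split_ifs at h0 with hcond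
      · obtain ⟨hac, hint⟩ := hcond
        have hgibbs := gibbs_aux _ _ hac hint
        have hle : ∫ x, llr (jointM P Q ρ₁ ρ₀) (jointN P Q ρ₁ ρ₀) x ∂(jointM P Q ρ₁ ρ₀) ≤ 0 :=
          ENNReal.ofReal_eq_zero.mp h0
        have hMN := hgibbs.2 hle
        obtain ⟨B, hB_meas, hB⟩ : ∃ B, MeasurableSet B ∧ ρ₁ B ≠ ρ₀ B := by
          by_contra hcon
          push_neg at hcon
          exact hρ (Measure.ext fun s hs ↦ hcon s hs)
        ext A hA_meas
        have happ := congrArg (fun m : Measure (X × Ω) ↦ m (A ×ˢ B)) hMN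
        simp only [jointM, jointN, Measure.smul_apply, Measure.add_apply,
          Measure.prod_prod, smul_eq_mul] at happ
        have h1top : P A * ρ₁ B ≠ ⊤ :=
          ENNReal.mul_ne_top (measure_ne_top _ _) (measure_ne_top _ _)
        have h2top : Q A * ρ₀ B ≠ ⊤ :=
          ENNReal.mul_ne_top (measure_ne_top _ _) (measure_ne_top _ _)
        have happ' := congrArg ENNReal.toReal happ
        simp only [ENNReal.toReal_mul] at happ'
        rw [ENNReal.toReal_add h1top h2top,
          ENNReal.toReal_add (measure_ne_top P A) (measure_ne_top Q A),
          ENNReal.toReal_add (measure_ne_top ρ₁ B) (measure_ne_top ρ₀ B)] at happ'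
        simp only [ENNReal.toReal_mul, ENNReal.toReal_inv, ENNReal.toReal_ofNat] at happ'
        have hr : (ρ₁ B).toReal ≠ (ρ₀ B).toReal := fun h ↦
          hB ((ENNReal.toReal_eq_toReal_iff' (measure_ne_top _ _) (measure_ne_top _ _)).mp h)
        have hfactor : ((P A).toReal - (Q A).toReal) * ((ρ₁ B).toReal - (ρ₀ B).toReal) = 0 := by
          linear_combination 4 * happ'
        rcases mul_eq_zero.mp hfactor with hfac | hfac
        · exact (ENNReal.toReal_eq_toReal_iff' (measure_ne_top _ _) (measure_ne_top _ _)).mp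
            (sub_eq_zero.mp hfac)
        · exact absurd (sub_eq_zero.mp hfac) hr
      · exact absurd h0 (by simp)
    · rintro rfl
      have hMN : jointM P P ρ₁ ρ₀ = jointN P P ρ₁ ρ₀ := by
        refine (Measure.prod_eq fun s t hs ht ↦ ?_).symm
        simp only [jointM, Measure.smul_apply, Measure.add_apply, Measure.prod_prod,
          smul_eq_mul]
        have hhalf : (2⁻¹ : ℝ≥0∞) * (P s + P s) = P s := by
          rw [← two_mul, ← mul_assoc, ENNReal.inv_mul_cancel two_ne_zero ENNReal.ofNat_ne_top,
            one_mul]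
        rw [hhalf]
        ring
      rw [hMN]
      exact klDiv_self_aux _
  have h2e : (2 : EReal) = ((2 : ℝ≥0∞) : EReal) := by
    rw [show (2:ℝ≥0∞) = 1 + 1 by norm_num, EReal.coe_ennreal_add, EReal.coe_ennreal_one]
    norm_num
  have hrew : valueGap P Q ρ₁ ρ₀
      = -(((2 * klDiv (jointM P Q ρ₁ ρ₀) (jointN P Q ρ₁ ρ₀) : ℝ≥0∞)) : EReal) := by
    rw [valueGap, neg_mul, h2e, EReal.coe_ennreal_mul]
  refine ⟨key, ?_, ?_⟩
  · rw [hrew]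
    refine EReal.neg_le.mpr ?_
    rw [neg_zero]
    exact EReal.coe_ennreal_nonneg _
  · rw [hrew, EReal.neg_eq_zero_iff, EReal.coe_ennreal_eq_zero]
    constructor
    · intro h
      rcases mul_eq_zero.mp h with h | h
      · exact absurd h two_ne_zero
      · exact (key.mp h).symm
    · intro h
      rw [key.mpr h.symm, mul_zero]
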